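/- d'Ocagne's identity 1: for integers m ≥ n ≥ 0, B_{k,m}·B_{k,n+1} − B_{k,n}·B_{k,m+1} = (k−1)^n · B_{k,m−n}. -/
import Mathlib


def B (k : ℤ) : ℕ → ℤ
  | 0 => 0
  | 1 => 1
  | (n+2) => 3*k * B k (n+1) + (1-k) * B k n

lemma aux9 (k : ℤ) (d : ℕ) : ∀ n : ℕ,
    B k (n+d) * B k (n+1) - B k n * B k (n+d+1) = (k-1) ^ n * B k d := by
  intro n
  induction n with
  | zero => simp [B]
  | succ n ih =>
    have h1 : B k (n+2) = 3*k * B k (n+1) + (1-k) * B k n := rfl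
    have h2 : B k (n+d+2) = 3*k * B k (n+d+1) + (1-k) * B k (n+d) := rfl
    simp only [show n+1+d = n+d+1 by omega, show n+1+d+1 = n+d+2 by omega,
      show n+1+1 = n+2 from rfl, show n+d+1+1 = n+d+2 from rfl]
    rw [h1, h2, pow_succ]
    linear_combination (k-1) * ih

theorem stmt9 (k : ℤ) (hk : 1 ≤ k) (m n : ℕ) (h : n ≤ m) :
    B k m * B k (n+1) - B k n * B k (m+1) = (k-1) ^ n * B k (m-n) := by
  obtain ⟨d, rfl⟩ := Nat.exists_eq_add_of_le h
  rw [Nat.add_sub_cancel_left]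
  exact aux9 k d n
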